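/- arXiv:2004.05987 — 4 statements merged into one kernel-verified Lean document; each statement's English description precedes it below -/
import Mathlib

section
/- Let A > 0 and φ ∈ ℝ. Define q_s(x,t) = A / (1 - exp(-A·x - i·A²·t + i·φ)). Then at every point (x,t) ∈ ℝ² at which exp(-A·x - i·A²·t + i·φ) ≠ 1 and exp(A·x - i·A²·t + i·φ) ≠ 1, the function q_s satisfies the NNLS equation: i·∂ₜq_s(x,t) + ∂ₓₓq_s(x,t) + 2·q_s(x,t)²·conj(q_s(-x,t)) = 0. -/
/-!
Write `E(x,t) = exp(-A·x - i·A²·t + i·φ)`, so that `q_s = A / (1 - E)`. Then `∂ₜE = -i·A²·E`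
and `∂ₓE = -A·E`, and the conjugate of the exponent at `-x` is the negative of the exponent at `x`,
so `conj (E(-x,t)) = E(x,t)⁻¹`. Each of the three terms of the equation is thus a rational
function of `E` alone, and their sum vanishes identically.
-/

noncomputable section

/-- The one-soliton solution of the NNLS equation:
`q_s(x,t) = A / (1 - exp(-A·x - i·A²·t + i·φ))`. -/
def qs (A φ : ℝ) (x t : ℝ) : ℂ :=
  (A : ℂ) / (1 - Complex.exp (-(A : ℂ) * x - Complex.I * (A : ℂ) ^ 2 * t + Complex.I * φ))

open Complex

section DivOneSubExp

variable (a b c : ℂ)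

def divOneSubExp (y : ℝ) : ℂ := a / (1 - exp (b * y + c))

lemma hasDerivAt_cexp_mul_ofReal_add (y : ℝ) :
    HasDerivAt (fun y : ℝ => exp (b * y + c)) (exp (b * y + c) * b) y := by
  simpa using ((((hasDerivAt_id (y : ℂ)).const_mul b).add_const c).cexp).comp_ofReal

lemma hasDerivAt_divOneSubExp {y : ℝ} (hy : exp (b * y + c) ≠ 1) :
    HasDerivAt (divOneSubExp a b c) (a * b * exp (b * y + c) / (1 - exp (b * y + c)) ^ 2) y := by
  have hden : 1 - exp (b * y + c) ≠ 0 := sub_ne_zero.mpr hy.symm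
  have hdenom := (hasDerivAt_const y 1).sub (hasDerivAt_cexp_mul_ofReal_add b c y)
  refine ((hasDerivAt_const y a).div hdenom hden).congr_deriv ?_
  simp only [Pi.sub_apply]
  field_simp
  ring

lemma deriv_divOneSubExp_eventuallyEq {y : ℝ} (hy : exp (b * y + c) ≠ 1) :
    deriv (divOneSubExp a b c) =ᶠ[nhds y]
      fun y' : ℝ => a * b * exp (b * y' + c) / (1 - exp (b * y' + c)) ^ 2 := by
  have hcont : Continuous fun y' : ℝ => exp (b * y' + c) := by fun_prop
  filter_upwards [hcont.continuousAt.eventually_ne hy] with y' hy'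
  exact (hasDerivAt_divOneSubExp a b c hy').deriv

lemma deriv_deriv_divOneSubExp {y : ℝ} (hy : exp (b * y + c) ≠ 1) :
    deriv (deriv (divOneSubExp a b c)) y
      = a * b ^ 2 * exp (b * y + c) * (1 + exp (b * y + c)) / (1 - exp (b * y + c)) ^ 3 := by
  rw [(deriv_divOneSubExp_eventuallyEq a b c hy).deriv_eq]
  have hden : 1 - exp (b * y + c) ≠ 0 := sub_ne_zero.mpr hy.symm
  have hnum := (hasDerivAt_cexp_mul_ofReal_add b c y).const_mul (a * b)
  have hdenom := ((hasDerivAt_const y 1).sub (hasDerivAt_cexp_mul_ofReal_add b c y)).pow 2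
  refine ((hnum.div hdenom (pow_ne_zero 2 hden)).congr_deriv ?_).deriv
  simp only [Pi.pow_apply, Pi.sub_apply]
  field_simp
  ring

end DivOneSubExp

lemma qs_eq_divOneSubExp_space (A φ t : ℝ) :
    (fun y : ℝ => qs A φ y t) = divOneSubExp A (-A) (-(I * A ^ 2 * t) + I * φ) := by
  ext y
  simp only [qs, divOneSubExp]
  ring_nf

lemma qs_eq_divOneSubExp_time (A φ x : ℝ) :
    (fun τ : ℝ => qs A φ x τ) = divOneSubExp A (-(I * A ^ 2)) (-A * x + I * φ) := by
  ext τ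
  simp only [qs, divOneSubExp]
  ring_nf

lemma conj_qs_neg (A φ x t : ℝ) :
    starRingEnd ℂ (qs A φ (-x) t)
      = A / (1 - (exp (-(A : ℂ) * x - I * (A : ℂ) ^ 2 * t + I * φ))⁻¹) := by
  simp only [qs, map_div₀, map_sub, map_one, conj_ofReal, ← exp_conj, ← exp_neg, map_add,
    map_mul, map_neg, map_pow, conj_I, ofReal_neg]
  ring_nf

lemma nnls_rational_identity (a w : ℂ) (hw0 : w ≠ 0) (hw1 : w ≠ 1) :
    I * (a * -(I * a ^ 2) * w / (1 - w) ^ 2) + a * (-a) ^ 2 * w * (1 + w) / (1 - w) ^ 3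
      + 2 * (a / (1 - w)) ^ 2 * (a / (1 - w⁻¹)) = 0 := by
  have hden : 1 - w ≠ 0 := sub_ne_zero.mpr hw1.symm
  field_simp
  linear_combination (a ^ 3 * w * (w - 1) ^ 2) * I_sq

theorem stmt0_general (A φ : ℝ) (x t : ℝ)
    (h1 : Complex.exp (-(A : ℂ) * x - Complex.I * (A : ℂ) ^ 2 * t + Complex.I * φ) ≠ 1) :
    Complex.I * deriv (fun τ : ℝ => qs A φ x τ) t
      + deriv (fun y : ℝ => deriv (fun y' : ℝ => qs A φ y' t) y) x
      + 2 * (qs A φ x t) ^ 2 * (starRingEnd ℂ) (qs A φ (-x) t) = 0 := by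
  set E := exp (-(A : ℂ) * x - I * (A : ℂ) ^ 2 * t + I * φ) with hE
  have hEt : exp (-(I * A ^ 2) * t + (-A * x + I * φ)) = E := by rw [hE]; ring_nf
  have hEx : exp (-A * x + (-(I * A ^ 2 * t) + I * φ)) = E := by rw [hE]; ring_nf
  have hdt := (hasDerivAt_divOneSubExp A (-(I * A ^ 2)) (-A * x + I * φ) (by rwa [hEt])).deriv
  have hdxx := deriv_deriv_divOneSubExp A (-A) (-(I * A ^ 2 * t) + I * φ) (by rwa [hEx])
  rw [hEt] at hdt
  rw [hEx] at hdxx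
  rw [qs_eq_divOneSubExp_time, hdt, qs_eq_divOneSubExp_space, hdxx, conj_qs_neg]
  exact nnls_rational_identity A E (exp_ne_zero _) h1

/-- At every point where the two relevant denominators do not vanish, `q_s` satisfies the
nonlocal nonlinear Schrödinger equation
`i·∂ₜ q + ∂ₓₓ q + 2·q(x,t)²·conj(q(-x,t)) = 0`. -/
theorem stmt0 (A φ : ℝ) (hA : 0 < A) (x t : ℝ)
    (h1 : Complex.exp (-(A : ℂ) * x - Complex.I * (A : ℂ) ^ 2 * t + Complex.I * φ) ≠ 1)
    (h2 : Complex.exp ((A : ℂ) * x - Complex.I * (A : ℂ) ^ 2 * t + Complex.I * φ) ≠ 1) :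
    Complex.I * deriv (fun τ : ℝ => qs A φ x τ) t
      + deriv (fun y : ℝ => deriv (fun y' : ℝ => qs A φ y' t) y) x
      + 2 * (qs A φ x t) ^ 2 * (starRingEnd ℂ) (qs A φ (-x) t) = 0 :=
  stmt0_general A φ x t h1
end
end

section
/- Let A > 0 and k ∈ ℝ \ {0}. Suppose q(y,0) = 0 for y < 0 and q(y,0) = A for y > 0. If a matrix function Ψ₁(·,0,k) satisfies the Jost integral equation (J1) at t = 0 for all x ≤ 0, then Ψ₁(x,0,k) = N₋(k) for all x ≤ 0; if Ψ₂(·,0,k) satisfies the Jost integral equation (J2) at t = 0 for all x ≥ 0, then Ψ₂(x,0,k) = N₊(k) for all x ≥ 0. Consequently the scattering matrix S(k) := Ψ₂(0,0,k)⁻¹ · Ψ₁(0,0,k) equals the matrix [[1 + A²/(4k²), -A/(2ik)], [A/(2ik), 1]], and det S(k) = 1. -/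
open MeasureTheory

noncomputable section

/-- `exp(c·σ₃)` where `σ₃ = diag(1,-1)`. -/
def expSigma3 (c : ℂ) : Matrix (Fin 2) (Fin 2) ℂ :=
  !![Complex.exp c, 0; 0, Complex.exp (-c)]

def Nplus (A : ℝ) (k : ℝ) : Matrix (Fin 2) (Fin 2) ℂ :=
  !![1, (A : ℂ) / (2 * Complex.I * k); 0, 1]

def Nminus (A : ℝ) (k : ℝ) : Matrix (Fin 2) (Fin 2) ℂ :=
  !![1, 0; (A : ℂ) / (2 * Complex.I * k), 1]

def Uplus (A : ℝ) : Matrix (Fin 2) (Fin 2) ℂ := !![0, (A : ℂ); 0, 0]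

def Uminus (A : ℝ) : Matrix (Fin 2) (Fin 2) ℂ := !![0, 0; -(A : ℂ), 0]

def Umat (q : ℝ → ℝ → ℂ) (x t : ℝ) : Matrix (Fin 2) (Fin 2) ℂ :=
  !![0, q x t; -(starRingEnd ℂ) (q (-x) t), 0]

def Phiplus (A : ℝ) (x t : ℝ) (k : ℝ) : Matrix (Fin 2) (Fin 2) ℂ :=
  Nplus A k * expSigma3 (-(Complex.I * k * x + 2 * Complex.I * k ^ 2 * t))

def Phiminus (A : ℝ) (x t : ℝ) (k : ℝ) : Matrix (Fin 2) (Fin 2) ℂ :=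
  Nminus A k * expSigma3 (-(Complex.I * k * x + 2 * Complex.I * k ^ 2 * t))

def Gplus (A : ℝ) (x y t : ℝ) (k : ℝ) : Matrix (Fin 2) (Fin 2) ℂ :=
  Phiplus A x t k * (Phiplus A y t k)⁻¹

def Gminus (A : ℝ) (x y t : ℝ) (k : ℝ) : Matrix (Fin 2) (Fin 2) ℂ :=
  Phiminus A x t k * (Phiminus A y t k)⁻¹

/-- The integrand of the Jost integral equation (J1). -/
def jostIntegrand1 (A : ℝ) (q : ℝ → ℝ → ℂ) (Ψ : ℝ → Matrix (Fin 2) (Fin 2) ℂ)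
    (x t k y : ℝ) : Matrix (Fin 2) (Fin 2) ℂ :=
  Gminus A x y t k * (Umat q y t - Uminus A) * Ψ y * expSigma3 (Complex.I * k * (x - y))

/-- The integrand of the Jost integral equation (J2). -/
def jostIntegrand2 (A : ℝ) (q : ℝ → ℝ → ℂ) (Ψ : ℝ → Matrix (Fin 2) (Fin 2) ℂ)
    (x t k y : ℝ) : Matrix (Fin 2) (Fin 2) ℂ :=
  Gplus A x y t k * (Umat q y t - Uplus A) * Ψ y * expSigma3 (Complex.I * k * (x - y))

namespace Matrix

variable {R : Type*} [CommRing R]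

theorem inv_upperUnitriangular_fin_two (a : R) : (!![1, a; 0, 1])⁻¹ = !![1, -a; 0, 1] := by
  refine inv_eq_left_inv ?_
  simp [one_fin_two]

theorem upperUnitriangular_inv_mul_lowerUnitriangular (a : R) :
    (!![1, a; 0, 1])⁻¹ * !![1, 0; a, 1] = !![1 - a ^ 2, -a; a, 1] := by
  rw [inv_upperUnitriangular_fin_two, mul_fin_two]
  congr <;> ring

end Matrix

theorem one_sub_div_two_I_mul_sq (A k : ℝ) :
    1 - ((A : ℂ) / (2 * Complex.I * k)) ^ 2 = 1 + (A : ℂ) ^ 2 / (4 * (k : ℂ) ^ 2) := by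
  rw [div_pow, mul_pow, mul_pow, Complex.I_sq]
  ring

theorem Umat_eq_Uminus {q : ℝ → ℝ → ℂ} {A y t : ℝ} (hy : q y t = 0) (hy' : q (-y) t = A) :
    Umat q y t = Uminus A := by
  simp [Umat, Uminus, hy, hy']

theorem Umat_eq_Uplus {q : ℝ → ℝ → ℂ} {A y t : ℝ} (hy : q y t = A) (hy' : q (-y) t = 0) :
    Umat q y t = Uplus A := by
  simp [Umat, Uplus, hy, hy']

section Jost

variable {A k t a : ℝ} {q : ℝ → ℝ → ℂ} {Ψ : ℝ → Matrix (Fin 2) (Fin 2) ℂ}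

theorem eq_Nminus_of_jost1 (hU : ∀ y < a, Umat q y t = Uminus A)
    (hJ : ∀ x ≤ a, ∀ i j : Fin 2,
      Ψ x i j = Nminus A k i j + ∫ y in Set.Iic x, jostIntegrand1 A q Ψ x t k y i j)
    {x : ℝ} (hx : x ≤ a) : Ψ x = Nminus A k := by
  ext i j
  rw [hJ x hx i j, integral_Iic_eq_integral_Iio, setIntegral_eq_zero_of_forall_eq_zero, add_zero]
  intro y hy
  simp [jostIntegrand1, hU y (lt_of_lt_of_le hy hx)]

theorem eq_Nplus_of_jost2 (hU : ∀ y > a, Umat q y t = Uplus A)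
    (hJ : ∀ x ≥ a, ∀ i j : Fin 2,
      Ψ x i j = Nplus A k i j - ∫ y in Set.Ici x, jostIntegrand2 A q Ψ x t k y i j)
    {x : ℝ} (hx : a ≤ x) : Ψ x = Nplus A k := by
  ext i j
  rw [hJ x hx i j, integral_Ici_eq_integral_Ioi, setIntegral_eq_zero_of_forall_eq_zero, sub_zero]
  intro y hy
  simp [jostIntegrand2, hU y (lt_of_le_of_lt hx hy)]

end Jost

theorem stmt1_general (A : ℝ) (k : ℝ)
    (q : ℝ → ℝ → ℂ)
    (hq0 : ∀ y : ℝ, y < 0 → q y 0 = 0) (hqA : ∀ y : ℝ, 0 < y → q y 0 = (A : ℂ))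
    (Ψ₁ Ψ₂ : ℝ → Matrix (Fin 2) (Fin 2) ℂ)
    (hJ1 : ∀ x : ℝ, x ≤ 0 → ∀ i j : Fin 2,
      Ψ₁ x i j = Nminus A k i j + ∫ y in Set.Iic x, jostIntegrand1 A q Ψ₁ x 0 k y i j)
    (hJ2 : ∀ x : ℝ, 0 ≤ x → ∀ i j : Fin 2,
      Ψ₂ x i j = Nplus A k i j - ∫ y in Set.Ici x, jostIntegrand2 A q Ψ₂ x 0 k y i j) :
    (∀ x : ℝ, x ≤ 0 → Ψ₁ x = Nminus A k) ∧
    (∀ x : ℝ, 0 ≤ x → Ψ₂ x = Nplus A k) ∧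
    (Ψ₂ 0)⁻¹ * Ψ₁ 0 =
      !![1 + (A : ℂ) ^ 2 / (4 * (k : ℂ) ^ 2), -(A : ℂ) / (2 * Complex.I * k);
         (A : ℂ) / (2 * Complex.I * k), 1] ∧
    ((Ψ₂ 0)⁻¹ * Ψ₁ 0).det = 1 := by
  have hΨ₁ : ∀ x : ℝ, x ≤ 0 → Ψ₁ x = Nminus A k := fun x ↦
    eq_Nminus_of_jost1 (fun y hy ↦ Umat_eq_Uminus (hq0 y hy) (hqA (-y) (neg_pos.2 hy))) hJ1
  have hΨ₂ : ∀ x : ℝ, 0 ≤ x → Ψ₂ x = Nplus A k := fun x ↦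
    eq_Nplus_of_jost2 (fun y hy ↦ Umat_eq_Uplus (hqA y hy) (hq0 (-y) (neg_neg_of_pos hy))) hJ2
  set a : ℂ := (A : ℂ) / (2 * Complex.I * k)
  have hS : (Ψ₂ 0)⁻¹ * Ψ₁ 0 = !![1 - a ^ 2, -a; a, 1] := by
    rw [hΨ₁ 0 le_rfl, hΨ₂ 0 le_rfl, Nplus, Nminus]
    exact Matrix.upperUnitriangular_inv_mul_lowerUnitriangular a
  refine ⟨hΨ₁, hΨ₂, ?_, ?_⟩
  · rw [hS, one_sub_div_two_I_mul_sq, neg_div]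
  · rw [hS, Matrix.det_fin_two_of]
    ring

/-- For pure-step initial data `q(·,0) = 0` on `(-∞,0)`, `= A` on `(0,∞)`:
any solution of (J1) at `t = 0` equals `N₋(k)` for `x ≤ 0`, any solution of (J2) at `t = 0`
equals `N₊(k)` for `x ≥ 0`, and the scattering matrix `S(k) = Ψ₂(0,0,k)⁻¹·Ψ₁(0,0,k)` equals
`[[1 + A²/(4k²), -A/(2ik)], [A/(2ik), 1]]`, with `det S(k) = 1`. -/
theorem stmt1 (A : ℝ) (hA : 0 < A) (k : ℝ) (hk : k ≠ 0)
    (q : ℝ → ℝ → ℂ)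
    (hq0 : ∀ y : ℝ, y < 0 → q y 0 = 0) (hqA : ∀ y : ℝ, 0 < y → q y 0 = (A : ℂ))
    (Ψ₁ Ψ₂ : ℝ → Matrix (Fin 2) (Fin 2) ℂ)
    (hint1 : ∀ x : ℝ, x ≤ 0 → ∀ i j : Fin 2,
      IntegrableOn (fun y => jostIntegrand1 A q Ψ₁ x 0 k y i j) (Set.Iic x))
    (hJ1 : ∀ x : ℝ, x ≤ 0 → ∀ i j : Fin 2,
      Ψ₁ x i j = Nminus A k i j + ∫ y in Set.Iic x, jostIntegrand1 A q Ψ₁ x 0 k y i j)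
    (hint2 : ∀ x : ℝ, 0 ≤ x → ∀ i j : Fin 2,
      IntegrableOn (fun y => jostIntegrand2 A q Ψ₂ x 0 k y i j) (Set.Ici x))
    (hJ2 : ∀ x : ℝ, 0 ≤ x → ∀ i j : Fin 2,
      Ψ₂ x i j = Nplus A k i j - ∫ y in Set.Ici x, jostIntegrand2 A q Ψ₂ x 0 k y i j) :
    (∀ x : ℝ, x ≤ 0 → Ψ₁ x = Nminus A k) ∧
    (∀ x : ℝ, 0 ≤ x → Ψ₂ x = Nplus A k) ∧
    (Ψ₂ 0)⁻¹ * Ψ₁ 0 =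
      !![1 + (A : ℂ) ^ 2 / (4 * (k : ℂ) ^ 2), -(A : ℂ) / (2 * Complex.I * k);
         (A : ℂ) / (2 * Complex.I * k), 1] ∧
    ((Ψ₂ 0)⁻¹ * Ψ₁ 0).det = 1 :=
  stmt1_general A k q hq0 hqA Ψ₁ Ψ₂ hJ1 hJ2
end
end

section
/- Let k ∈ ℝ \ {0} and t ∈ ℝ, and suppose that for the potential q the matrix function x ↦ Ψ₁(x,t,-k) satisfies the Jost integral equation (J1) with spectral parameter -k for every x ∈ ℝ, with all integrals absolutely convergent. Then the matrix function Ψ̃₂(x,t,k) := Λ · conj(Ψ₁(-x,t,-k)) · Λ (entrywise complex conjugation), where Λ = [[0,1],[1,0]], satisfies the Jost integral equation (J2) with spectral parameter k for every x ∈ ℝ. -/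
/-! The map `M ↦ Λ · conj M · Λ` is a conjugate-linear ring automorphism of `2 × 2` complex
matrices. It sends `N₋(k)` to `N₊(-k)`, `Φ₋(x,t,k)` to `Φ₊(-x,t,-k)` (hence `G₋` to `G₊` with
`x, y, k` negated), `exp(cσ₃)` to `exp(-c̄σ₃)`, and `U(x,t) - U₋` to `-(U(-x,t) - U₊)`. So it carries
the integrand of (J1) at `(-x, -y, -k)` to minus the integrand of (J2) at `(x, y, k)`, and conjugating
(J1) at `-x` and reflecting `y ↦ -y`, which maps `(-∞, -x]` onto `[x, ∞)`, gives (J2) at `x`. -/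

open MeasureTheory

noncomputable section

def Lambda : Matrix (Fin 2) (Fin 2) ℂ := !![0, 1; 1, 0]

/-- The symmetry `Ψ̃₂(x,t,k) := Λ · conj(Ψ₁(-x,t,-k)) · Λ`. -/
def symmPsi (Ψ₁ : ℝ → Matrix (Fin 2) (Fin 2) ℂ) (x : ℝ) : Matrix (Fin 2) (Fin 2) ℂ :=
  Lambda * (Ψ₁ (-x)).map (starRingEnd ℂ) * Lambda

open ComplexConjugate

def lambdaConj (M : Matrix (Fin 2) (Fin 2) ℂ) : Matrix (Fin 2) (Fin 2) ℂ :=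
  Lambda * M.map (starRingEnd ℂ) * Lambda

lemma Lambda_mul_Lambda : Lambda * Lambda = 1 := by
  simp [Lambda, Matrix.one_fin_two]

lemma Lambda_inv : Lambda⁻¹ = Lambda :=
  Matrix.inv_eq_left_inv Lambda_mul_Lambda

lemma lambdaConj_apply (M : Matrix (Fin 2) (Fin 2) ℂ) (i j : Fin 2) :
    lambdaConj M i j = conj (M i.rev j.rev) := by
  fin_cases i <;> fin_cases j <;>
    simp [lambdaConj, Lambda, Matrix.mul_apply, Matrix.vecMul, dotProduct, Fin.sum_univ_two]

lemma lambdaConj_mul (M N : Matrix (Fin 2) (Fin 2) ℂ) :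
    lambdaConj (M * N) = lambdaConj M * lambdaConj N := by
  simp only [lambdaConj, Matrix.map_mul, Matrix.mul_assoc]
  rw [← Matrix.mul_assoc Lambda Lambda, Lambda_mul_Lambda, Matrix.one_mul]

lemma lambdaConj_inv (M : Matrix (Fin 2) (Fin 2) ℂ) : lambdaConj M⁻¹ = (lambdaConj M)⁻¹ := by
  have hmap : ∀ N : Matrix (Fin 2) (Fin 2) ℂ, N.map (starRingEnd ℂ) = N.conjTranspose.transpose :=
    fun _ => rfl
  rw [lambdaConj, lambdaConj, Matrix.mul_inv_rev, Matrix.mul_inv_rev, Lambda_inv, hmap, hmap,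
    Matrix.conjTranspose_nonsing_inv, Matrix.transpose_nonsing_inv, Matrix.mul_assoc]

lemma symmPsi_eq_lambdaConj (Ψ₁ : ℝ → Matrix (Fin 2) (Fin 2) ℂ) (x : ℝ) :
    symmPsi Ψ₁ x = lambdaConj (Ψ₁ (-x)) :=
  rfl

lemma symmPsi_apply (Ψ₁ : ℝ → Matrix (Fin 2) (Fin 2) ℂ) (x : ℝ) (i j : Fin 2) :
    symmPsi Ψ₁ x i j = conj (Ψ₁ (-x) i.rev j.rev) := by
  rw [symmPsi_eq_lambdaConj, lambdaConj_apply]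

lemma lambdaConj_expSigma3 (c : ℂ) : lambdaConj (expSigma3 c) = expSigma3 (-conj c) := by
  ext i j
  fin_cases i <;> fin_cases j <;> simp [lambdaConj_apply, expSigma3, ← Complex.exp_conj]

lemma lambdaConj_Nminus (A k : ℝ) : lambdaConj (Nminus A k) = Nplus A (-k) := by
  ext i j
  fin_cases i <;> fin_cases j <;> simp [lambdaConj_apply, Nminus, Nplus, map_div₀, map_ofNat]

lemma lambdaConj_Phiminus (A x t k : ℝ) :
    lambdaConj (Phiminus A x t k) = Phiplus A (-x) t (-k) := by
  rw [Phiminus, Phiplus, lambdaConj_mul, lambdaConj_Nminus, lambdaConj_expSigma3]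
  congr 2
  simp only [map_neg, map_add, map_mul, map_pow, map_ofNat, Complex.conj_I, Complex.conj_ofReal]
  push_cast
  ring

lemma lambdaConj_Gminus (A x y t k : ℝ) :
    lambdaConj (Gminus A x y t k) = Gplus A (-x) (-y) t (-k) := by
  rw [Gminus, Gplus, lambdaConj_mul, lambdaConj_inv, lambdaConj_Phiminus, lambdaConj_Phiminus]

lemma lambdaConj_Umat_sub_Uminus (A : ℝ) (q : ℝ → ℝ → ℂ) (x t : ℝ) :
    lambdaConj (Umat q x t - Uminus A) = -(Umat q (-x) t - Uplus A) := by
  ext i j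
  fin_cases i <;> fin_cases j <;> simp [lambdaConj_apply, Umat, Uminus, Uplus, neg_add_eq_sub]

lemma jostIntegrand2_symmPsi (A : ℝ) (q : ℝ → ℝ → ℂ) (Ψ₁ : ℝ → Matrix (Fin 2) (Fin 2) ℂ)
    (x t k y : ℝ) :
    jostIntegrand2 A q (symmPsi Ψ₁) x t k y
      = -lambdaConj (jostIntegrand1 A q Ψ₁ (-x) t (-k) (-y)) := by
  have hexp :
      lambdaConj (expSigma3 (Complex.I * ((-k : ℝ) : ℂ) * (((-x : ℝ) : ℂ) - ((-y : ℝ) : ℂ))))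
        = expSigma3 (Complex.I * k * (x - y)) := by
    rw [lambdaConj_expSigma3]
    congr 1
    simp only [map_mul, map_sub, Complex.conj_I, Complex.conj_ofReal]
    push_cast
    ring
  rw [jostIntegrand1, jostIntegrand2, lambdaConj_mul, lambdaConj_mul, lambdaConj_mul,
    lambdaConj_Gminus, lambdaConj_Umat_sub_Uminus, hexp, symmPsi_eq_lambdaConj]
  simp only [neg_neg, Matrix.mul_neg, Matrix.neg_mul]

lemma integrableOn_Ici_conj_comp_neg {f : ℝ → ℂ} {x : ℝ} (hf : IntegrableOn f (Set.Iic (-x))) :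
    IntegrableOn (fun y => conj (f (-y))) (Set.Ici x) := by
  have h := Complex.conjCLE.toContinuousLinearMap.integrable_comp hf.comp_neg
  rwa [Set.neg_Iic, neg_neg] at h

lemma integral_Ici_conj_comp_neg (f : ℝ → ℂ) (x : ℝ) :
    ∫ y in Set.Ici x, conj (f (-y)) = conj (∫ y in Set.Iic (-x), f y) := by
  rw [integral_Ici_eq_integral_Ioi, integral_comp_neg_Ioi x (fun y => conj (f y)), integral_conj]

theorem stmt2_general (A : ℝ) (k : ℝ) (t : ℝ)
    (q : ℝ → ℝ → ℂ) (Ψ₁ : ℝ → Matrix (Fin 2) (Fin 2) ℂ)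
    (hint1 : ∀ x : ℝ, ∀ i j : Fin 2,
      IntegrableOn (fun y => jostIntegrand1 A q Ψ₁ x t (-k) y i j) (Set.Iic x))
    (hJ1 : ∀ x : ℝ, ∀ i j : Fin 2,
      Ψ₁ x i j = Nminus A (-k) i j + ∫ y in Set.Iic x, jostIntegrand1 A q Ψ₁ x t (-k) y i j) :
    ∀ x : ℝ, ∀ i j : Fin 2,
      IntegrableOn (fun y => jostIntegrand2 A q (symmPsi Ψ₁) x t k y i j) (Set.Ici x) ∧
      symmPsi Ψ₁ x i j
        = Nplus A k i j - ∫ y in Set.Ici x, jostIntegrand2 A q (symmPsi Ψ₁) x t k y i j := by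
  intro x i j
  have hJ2 : (fun y => jostIntegrand2 A q (symmPsi Ψ₁) x t k y i j)
      = fun y => -conj (jostIntegrand1 A q Ψ₁ (-x) t (-k) (-y) i.rev j.rev) := by
    funext y
    rw [jostIntegrand2_symmPsi, Matrix.neg_apply, lambdaConj_apply]
  refine ⟨?_, ?_⟩
  · rw [hJ2]
    exact (integrableOn_Ici_conj_comp_neg (hint1 (-x) i.rev j.rev)).neg
  · rw [hJ2, integral_neg, integral_Ici_conj_comp_neg
        (fun y => jostIntegrand1 A q Ψ₁ (-x) t (-k) y i.rev j.rev), sub_neg_eq_add, symmPsi_apply,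
      hJ1, map_add, ← lambdaConj_apply, lambdaConj_Nminus, neg_neg]

/-- If `x ↦ Ψ₁(x,t,-k)` satisfies the Jost integral equation (J1) with spectral parameter `-k`
(with absolutely convergent integrals), then `Ψ̃₂(x,t,k) = Λ·conj(Ψ₁(-x,t,-k))·Λ` satisfies the
Jost integral equation (J2) with spectral parameter `k` (with absolutely convergent integrals). -/
theorem stmt2 (A : ℝ) (hA : 0 < A) (k : ℝ) (hk : k ≠ 0) (t : ℝ)
    (q : ℝ → ℝ → ℂ) (Ψ₁ : ℝ → Matrix (Fin 2) (Fin 2) ℂ)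
    (hint1 : ∀ x : ℝ, ∀ i j : Fin 2,
      IntegrableOn (fun y => jostIntegrand1 A q Ψ₁ x t (-k) y i j) (Set.Iic x))
    (hJ1 : ∀ x : ℝ, ∀ i j : Fin 2,
      Ψ₁ x i j = Nminus A (-k) i j + ∫ y in Set.Iic x, jostIntegrand1 A q Ψ₁ x t (-k) y i j) :
    ∀ x : ℝ, ∀ i j : Fin 2,
      IntegrableOn (fun y => jostIntegrand2 A q (symmPsi Ψ₁) x t k y i j) (Set.Ici x) ∧
      symmPsi Ψ₁ x i j
        = Nplus A k i j - ∫ y in Set.Ici x, jostIntegrand2 A q (symmPsi Ψ₁) x t k y i j :=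
  stmt2_general A k t q Ψ₁ hint1 hJ1
end
end

section
/- Let a₁₁ and a₂₁ be nonzero complex numbers. Let a₁, a₂, b be complex-valued functions on (-δ,δ)\{0} ⊂ ℝ for some δ > 0 such that a₁(k) = a₁₁/k + O(1) and a₂(k) = a₂₁·k + O(k²) as k → 0, a₁ and a₂ are nonvanishing for k ≠ 0, and a₁(k)·a₂(k) + b(k)·conj(b(-k)) = 1 for all k ≠ 0. Then 1 + r₁(k)·r₂(k) = 1/(a₁₁·a₂₁) + O(k) as k → 0, k ∈ ℝ\{0}. -/
/-!
Unimodularity turns `1 + r₁ r₂` into `(a₁ a₂)⁻¹`. The expansions of `a₁` and `a₂` give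
`a₁ a₂ = a₁₁ a₂₁ + O(k)`, and inverting near the nonzero limit `a₁₁ a₂₁` preserves the `O(k)` error.
-/

open Filter Asymptotics Topology

section

variable {α 𝕜 : Type*} [NormedField 𝕜] {l : Filter α}

theorem one_add_div_mul_div_eq_inv_mul {a₁ a₂ b b' : 𝕜} (ha₁ : a₁ ≠ 0) (ha₂ : a₂ ≠ 0)
    (hunimod : a₁ * a₂ + b * b' = 1) :
    1 + b / a₁ * (b' / a₂) = (a₁ * a₂)⁻¹ := by
  field_simp
  linear_combination hunimod

theorem isBigO_mul_sub_mul_of_pole_of_zero {x a₁ a₂ : α → 𝕜} {A B : 𝕜}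
    (hx : Tendsto x l (𝓝 0)) (hx₀ : ∀ᶠ t in l, x t ≠ 0)
    (h₁ : (fun t => a₁ t - A / x t) =O[l] fun _ => (1 : 𝕜))
    (h₂ : (fun t => a₂ t - B * x t) =O[l] fun t => x t ^ 2) :
    (fun t => a₁ t * a₂ t - A * B) =O[l] x := by
  have hsq : (fun t => x t ^ 2) =O[l] x := by
    simpa [sq] using (hx.isBigO_one 𝕜).mul (isBigO_refl x l)
  have ha₂ : a₂ =O[l] x := by
    simpa using (h₂.trans hsq).add ((isBigO_refl x l).const_mul_left B)
  have hpole : (fun t => A / x t * (a₂ t - B * x t)) =O[l] x := by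
    refine ((isBigO_refl (fun t => (x t)⁻¹) l).const_mul_left A).mul h₂ |>.congr' ?_ ?_
    · filter_upwards with t
      rw [div_eq_mul_inv]
    · filter_upwards [hx₀] with t ht
      rw [sq, inv_mul_cancel_left₀ ht]
  have hregular : (fun t => (a₁ t - A / x t) * a₂ t) =O[l] x := by
    simpa using h₁.mul ha₂
  refine (hregular.add hpole).congr' ?_ EventuallyEq.rfl
  filter_upwards [hx₀] with t ht
  field_simp
  ring

theorem Asymptotics.IsBigO.inv_sub_inv {F : Type*} [NormedAddCommGroup F] {P : α → 𝕜}
    {g : α → F} {c : 𝕜}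
    (hP : (fun t => P t - c) =O[l] g) (hc : c ≠ 0) (hg : Tendsto g l (𝓝 0)) :
    (fun t => (P t)⁻¹ - c⁻¹) =O[l] g := by
  have hPc : Tendsto P l (𝓝 c) := by
    simpa using (hP.trans_tendsto hg).add_const c
  have hPinv : (fun t => (P t)⁻¹) =O[l] fun _ => (1 : 𝕜) := (hPc.inv₀ hc).isBigO_one 𝕜
  have hdiff : (fun t => (P t)⁻¹ - c⁻¹) =O[l] fun t => P t - c := by
    have hneg := (isBigO_refl (fun t => P t - c) l).neg_left.const_mul_left c⁻¹
    refine (hneg.mul hPinv).congr' ?_ ?_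
    · filter_upwards [hPc.eventually_ne hc] with t ht
      field_simp
      ring
    · simp
  exact hdiff.trans hP

end

/-- Case II behavior of `1 + r₁(k)r₂(k)` at `k = 0`, where `r₁ = b/a₁`, `r₂ = conj(b(-·))/a₂`:
if `a₁(k) = a₁₁/k + O(1)`, `a₂(k) = a₂₁·k + O(k²)` as `k → 0` (with `a₁₁, a₂₁ ≠ 0`), `a₁, a₂`
are nonvanishing and `a₁a₂ + b·conj(b(-·)) = 1` on a punctured neighborhood of `0` in `ℝ`, then
`1 + r₁(k)r₂(k) = 1/(a₁₁·a₂₁) + O(k)` as `k → 0`, `k ≠ 0`. -/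
theorem stmt14 (a₁₁ a₂₁ : ℂ) (ha₁₁ : a₁₁ ≠ 0) (ha₂₁ : a₂₁ ≠ 0)
    (a₁ a₂ b : ℝ → ℂ)
    (h1 : (fun k : ℝ => a₁ k - a₁₁ / (k : ℂ)) =O[𝓝[≠] (0 : ℝ)] fun _ => (1 : ℂ))
    (h2 : (fun k : ℝ => a₂ k - a₂₁ * (k : ℂ)) =O[𝓝[≠] (0 : ℝ)] fun k => (k : ℂ) ^ 2)
    (h3 : ∀ᶠ k : ℝ in 𝓝[≠] (0 : ℝ),
      a₁ k ≠ 0 ∧ a₂ k ≠ 0 ∧ a₁ k * a₂ k + b k * (starRingEnd ℂ) (b (-k)) = 1) :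
    (fun k : ℝ =>
        (1 + (b k / a₁ k) * ((starRingEnd ℂ) (b (-k)) / a₂ k)) - 1 / (a₁₁ * a₂₁))
      =O[𝓝[≠] (0 : ℝ)] fun k => (k : ℂ) := by
  have hk : Tendsto (fun k : ℝ => (k : ℂ)) (𝓝[≠] 0) (𝓝 0) := by
    simpa using (Complex.continuous_ofReal.tendsto 0).mono_left nhdsWithin_le_nhds
  have hk₀ : ∀ᶠ k : ℝ in 𝓝[≠] 0, (k : ℂ) ≠ 0 := by
    filter_upwards [self_mem_nhdsWithin] with k hk0 using Complex.ofReal_ne_zero.mpr hk0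
  have hprod := isBigO_mul_sub_mul_of_pole_of_zero hk hk₀ h1 h2
  refine (hprod.inv_sub_inv (mul_ne_zero ha₁₁ ha₂₁) hk).congr' ?_ EventuallyEq.rfl
  filter_upwards [h3] with k ⟨ha₁, ha₂, hunimod⟩
  rw [one_add_div_mul_div_eq_inv_mul ha₁ ha₂ hunimod, one_div]
end
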